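/- arXiv:math/0604155 — 5 statements merged into one kernel-verified Lean document; each statement's English description precedes it below -/
import Mathlib

section
/- Let P, Q : ℝ × S² → ℝ be functions (playing the role of the news functions c_{,0} and d_{,0}) such that for every u ∈ ℝ the function ω ↦ P(u,ω)² + Q(u,ω)² is integrable on S². Suppose m₀, m₁, m₂, m₃ : ℝ → ℝ are differentiable functions satisfying the Bondi mass-loss formulas m_ν'(u) = -(1/(4π)) ∫_{S²} (P(u,ω)² + Q(u,ω)²) n^ν(ω) dS(ω) for ν = 0,1,2,3 and all u ∈ ℝ. Then the function u ↦ m₀(u) − √(m₁(u)² + m₂(u)² + m₃(u)²) is nonincreasing (antitone) on ℝ. -/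
/-!
Write `m = (m₁, m₂, m₃) ∈ ℝ³` and `F = P² + Q² ≥ 0`. The mass-loss formulas say
`m₀' = -(1/4π) ∫ F` and `m' = -(1/4π) ∫ F • ω`; since `‖ω‖ = 1` on the sphere, `‖m'‖ ≤ -m₀'`.
The mean value inequality then gives `‖m v - m u‖ ≤ m₀ u - m₀ v` for `u ≤ v`, and the reverse
triangle inequality turns this into the monotonicity of `m₀ - ‖m‖`.
-/

open MeasureTheory Real Metric

/-- The unit sphere S² in Euclidean ℝ³. -/
abbrev Sphere2 : Type := Metric.sphere (0 : EuclideanSpace ℝ (Fin 3)) 1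

/-- The standard surface measure on S² (total measure 4π). -/
noncomputable def sphereMeasure : Measure Sphere2 :=
  (volume : Measure (EuclideanSpace ℝ (Fin 3))).toSphere

/-- The i-th Cartesian coordinate function on S², i = 0,1,2. -/
def sphereCoord (i : Fin 3) (ω : Sphere2) : ℝ := (ω : EuclideanSpace ℝ (Fin 3)) i

theorem hasDerivAt_piLp {𝕜 ι : Type*} [NontriviallyNormedField 𝕜] [Fintype ι] {E : ι → Type*}
    [∀ i, NormedAddCommGroup (E i)] [∀ i, NormedSpace 𝕜 (E i)] (p : ENNReal) [Fact (1 ≤ p)]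
    {f : 𝕜 → PiLp p E} {f' : PiLp p E} {x : 𝕜} :
    HasDerivAt f f' x ↔ ∀ i, HasDerivAt (fun t => f t i) (f' i) x := by
  refine ⟨fun h i => ?_, fun h => ?_⟩
  · exact (PiLp.hasFDerivAt_apply p (f x) i).comp_hasDerivAt x h
  · exact (PiLp.hasFDerivAt_toLp p _).comp_hasDerivAt x (hasDerivAt_pi.2 h)

theorem antitone_sub_norm_of_norm_deriv_le {E : Type*} [NormedAddCommGroup E] [NormedSpace ℝ E]
    {g g' : ℝ → ℝ} {M M' : ℝ → E} (hg : ∀ u, HasDerivAt g (g' u) u)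
    (hM : ∀ u, HasDerivAt M (M' u) u) (hle : ∀ u, ‖M' u‖ ≤ -g' u) :
    Antitone fun u => g u - ‖M u‖ := by
  intro u v huv
  have hdisp : ‖M v - M u‖ ≤ g u - g v :=
    image_norm_le_of_norm_deriv_right_le_deriv_boundary (f := fun x => M x - M u)
      (B := fun x => g u - g x)
      (fun x _ => ((hM x).sub_const (M u)).continuousAt.continuousWithinAt)
      (fun x _ => ((hM x).sub_const (M u)).hasDerivWithinAt) (by simp)
      (fun x => (hg x).const_sub (g u)) (fun x _ => hle x) ⟨huv, le_rfl⟩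
  linarith [norm_sub_norm_le (M u) (M v), norm_sub_rev (M u) (M v)]

theorem norm_integral_smul_le_integral {X E : Type*} [MeasurableSpace X] [NormedAddCommGroup E]
    [NormedSpace ℝ E] {μ : Measure X} {f : X → ℝ} {n : X → E} (hf : Integrable f μ)
    (hf0 : 0 ≤ᵐ[μ] f) (hn : ∀ᵐ x ∂μ, ‖n x‖ ≤ 1) : ‖∫ x, f x • n x ∂μ‖ ≤ ∫ x, f x ∂μ :=
  norm_integral_le_of_norm_le hf <| by
    filter_upwards [hf0, hn] with x hx0 hx1
    rw [norm_smul, Real.norm_of_nonneg hx0]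
    exact mul_le_of_le_one_right hx0 hx1

theorem integral_smul_sphere_apply {F : Sphere2 → ℝ} (hF : Integrable F sphereMeasure)
    (i : Fin 3) :
    (∫ ω, F ω • (ω : EuclideanSpace ℝ (Fin 3)) ∂sphereMeasure) i
      = ∫ ω, F ω * sphereCoord i ω ∂sphereMeasure := by
  have hint : Integrable (fun ω : Sphere2 => F ω • (ω : EuclideanSpace ℝ (Fin 3))) sphereMeasure :=
    hF.smul_bdd 1 continuous_subtype_val.aestronglyMeasurable
      (ae_of_all _ fun ω => (norm_eq_of_mem_sphere ω).le)
  rw [eval_integral_piLp hint.eval_piLp]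
  rfl

/-- Generalized Bondi mass loss (Proposition 2.1): if the Bondi energy-momentum
`m₀, m₁, m₂, m₃` satisfies the mass-loss formulas with news functions `P`, `Q`, then
`m₀ - √(m₁² + m₂² + m₃²)` is nonincreasing. -/
theorem bondi_energy_nonincreasing
    (P Q : ℝ × Sphere2 → ℝ)
    (hPQint : ∀ u : ℝ,
      Integrable (fun ω : Sphere2 => (P (u, ω)) ^ 2 + (Q (u, ω)) ^ 2) sphereMeasure)
    (m₀ m₁ m₂ m₃ : ℝ → ℝ)
    (hm₀ : ∀ u : ℝ, HasDerivAt m₀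
      (-(1 / (4 * π)) * ∫ ω : Sphere2, ((P (u, ω)) ^ 2 + (Q (u, ω)) ^ 2) ∂sphereMeasure) u)
    (hm₁ : ∀ u : ℝ, HasDerivAt m₁
      (-(1 / (4 * π)) * ∫ ω : Sphere2,
        ((P (u, ω)) ^ 2 + (Q (u, ω)) ^ 2) * sphereCoord 0 ω ∂sphereMeasure) u)
    (hm₂ : ∀ u : ℝ, HasDerivAt m₂
      (-(1 / (4 * π)) * ∫ ω : Sphere2,
        ((P (u, ω)) ^ 2 + (Q (u, ω)) ^ 2) * sphereCoord 1 ω ∂sphereMeasure) u)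
    (hm₃ : ∀ u : ℝ, HasDerivAt m₃
      (-(1 / (4 * π)) * ∫ ω : Sphere2,
        ((P (u, ω)) ^ 2 + (Q (u, ω)) ^ 2) * sphereCoord 2 ω ∂sphereMeasure) u) :
    Antitone (fun u : ℝ =>
      m₀ u - Real.sqrt ((m₁ u) ^ 2 + (m₂ u) ^ 2 + (m₃ u) ^ 2)) := by
  set flux : ℝ → Sphere2 → ℝ := fun u ω => P (u, ω) ^ 2 + Q (u, ω) ^ 2
  set c : ℝ := 1 / (4 * π)
  have hM : ∀ u, HasDerivAt (fun u => !₂[m₁ u, m₂ u, m₃ u])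
      (-c • ∫ ω, flux u ω • (ω : EuclideanSpace ℝ (Fin 3)) ∂sphereMeasure) u := by
    intro u
    refine (hasDerivAt_piLp 2).2 fun i => ?_
    rw [PiLp.smul_apply, integral_smul_sphere_apply (hPQint u), smul_eq_mul]
    fin_cases i
    exacts [hm₁ u, hm₂ u, hm₃ u]
  have hbound : ∀ u, ‖-c • ∫ ω, flux u ω • (ω : EuclideanSpace ℝ (Fin 3)) ∂sphereMeasure‖
      ≤ -(-c * ∫ ω, flux u ω ∂sphereMeasure) := by
    intro u
    rw [norm_smul, norm_neg, Real.norm_of_nonneg (by positivity), neg_mul, neg_neg]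
    exact mul_le_mul_of_nonneg_left (norm_integral_smul_le_integral (hPQint u)
      (ae_of_all _ fun ω => by positivity) (ae_of_all _ fun ω => (norm_eq_of_mem_sphere ω).le))
      (by positivity)
  simpa [EuclideanSpace.norm_eq, Fin.sum_univ_three] using
    antitone_sub_norm_of_norm_deriv_le hm₀ hM hbound
end

section
/- Let c, d : ℝ² → ℝ be smooth functions of (θ, ψ) satisfying Condition A (2π-periodicity in ψ) and Condition B (∫₀^{2π} c(0,ψ) dψ = 0 and ∫₀^{2π} c(π,ψ) dψ = 0). Define on (0,π) × ℝ the functions l = ∂_θ c + 2c·cot θ + csc θ·∂_ψ d, l̄ = ∂_θ d + 2d·cot θ − csc θ·∂_ψ c, and G = ∂_θ l + l·cot θ + csc θ·∂_ψ l̄. Then the function θ ↦ sin θ · ∫₀^{2π} G(θ,ψ) dψ extends integrably to (0,π) and ∫₀^{π} ( ∫₀^{2π} G(θ,ψ) dψ ) sin θ dθ = 0. -/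
open Real MeasureTheory

/-- `l = ∂_θ c + 2 c cot θ + csc θ ∂_ψ d`. -/
noncomputable def lfun (c d : ℝ → ℝ → ℝ) (θ ψ : ℝ) : ℝ :=
  deriv (fun t => c t ψ) θ + 2 * c θ ψ * (Real.cos θ / Real.sin θ)
    + (Real.sin θ)⁻¹ * deriv (fun s => d θ s) ψ

/-- `l̄ = ∂_θ d + 2 d cot θ − csc θ ∂_ψ c`. -/
noncomputable def lbarfun (c d : ℝ → ℝ → ℝ) (θ ψ : ℝ) : ℝ :=
  deriv (fun t => d t ψ) θ + 2 * d θ ψ * (Real.cos θ / Real.sin θ)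
    - (Real.sin θ)⁻¹ * deriv (fun s => c θ s) ψ

/-- `G = ∂_θ l + l cot θ + csc θ ∂_ψ l̄`. -/
noncomputable def Gfun (c d : ℝ → ℝ → ℝ) (θ ψ : ℝ) : ℝ :=
  deriv (fun t => lfun c d t ψ) θ + lfun c d θ ψ * (Real.cos θ / Real.sin θ)
    + (Real.sin θ)⁻¹ * deriv (fun s => lbarfun c d θ s) ψ


noncomputable def ptd (f : ℝ → ℝ → ℝ) (θ ψ : ℝ) : ℝ := deriv (fun t => f t ψ) θ
noncomputable def psd (f : ℝ → ℝ → ℝ) (θ ψ : ℝ) : ℝ := deriv (fun s => f θ s) ψ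
noncomputable def intF (f : ℝ → ℝ → ℝ) (θ : ℝ) : ℝ := ∫ ψ in (0:ℝ)..(2*π), f θ ψ

lemma hasDerivAt_ptd {f : ℝ → ℝ → ℝ} (hf : ContDiff ℝ (⊤ : ℕ∞) (Function.uncurry f)) (θ ψ : ℝ) :
    HasDerivAt (fun t => f t ψ) (ptd f θ ψ) θ := by
  have h : DifferentiableAt ℝ (Function.uncurry f ∘ fun t => (t, ψ)) θ :=
    DifferentiableAt.comp θ (hf.differentiable (by simp) (θ, ψ))
      (differentiableAt_id.prodMk (differentiableAt_const ψ))
  exact h.hasDerivAt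

lemma hasDerivAt_psd {f : ℝ → ℝ → ℝ} (hf : ContDiff ℝ (⊤ : ℕ∞) (Function.uncurry f)) (θ ψ : ℝ) :
    HasDerivAt (fun s => f θ s) (psd f θ ψ) ψ := by
  have h : DifferentiableAt ℝ (Function.uncurry f ∘ fun s => (θ, s)) ψ :=
    DifferentiableAt.comp ψ (hf.differentiable (by simp) (θ, ψ))
      ((differentiableAt_const θ).prodMk differentiableAt_id)
  exact h.hasDerivAt

lemma ptd_eq_fderiv {f : ℝ → ℝ → ℝ} (hf : ContDiff ℝ (⊤ : ℕ∞) (Function.uncurry f)) (θ ψ : ℝ) :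
    ptd f θ ψ = fderiv ℝ (Function.uncurry f) (θ, ψ) (1, 0) := by
  have h := (hf.differentiable (by simp) (θ, ψ)).hasFDerivAt.comp_hasDerivAt θ
    ((hasDerivAt_id θ).prodMk (hasDerivAt_const θ ψ))
  exact h.deriv

lemma psd_eq_fderiv {f : ℝ → ℝ → ℝ} (hf : ContDiff ℝ (⊤ : ℕ∞) (Function.uncurry f)) (θ ψ : ℝ) :
    psd f θ ψ = fderiv ℝ (Function.uncurry f) (θ, ψ) (0, 1) := by
  have h := (hf.differentiable (by simp) (θ, ψ)).hasFDerivAt.comp_hasDerivAt ψ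
    ((hasDerivAt_const ψ θ).prodMk (hasDerivAt_id ψ))
  exact h.deriv

lemma contDiff_ptd {f : ℝ → ℝ → ℝ} (hf : ContDiff ℝ (⊤ : ℕ∞) (Function.uncurry f)) :
    ContDiff ℝ (⊤ : ℕ∞) (Function.uncurry (ptd f)) := by
  have h : ContDiff ℝ (⊤ : ℕ∞) (fun p : ℝ × ℝ => fderiv ℝ (Function.uncurry f) p (1, 0)) :=
    (hf.fderiv_right (by simp)).clm_apply contDiff_const
  have he : Function.uncurry (ptd f) = fun p : ℝ × ℝ => fderiv ℝ (Function.uncurry f) p (1, 0) :=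
    funext fun p => ptd_eq_fderiv hf p.1 p.2
  rw [he]; exact h

lemma contDiff_psd {f : ℝ → ℝ → ℝ} (hf : ContDiff ℝ (⊤ : ℕ∞) (Function.uncurry f)) :
    ContDiff ℝ (⊤ : ℕ∞) (Function.uncurry (psd f)) := by
  have h : ContDiff ℝ (⊤ : ℕ∞) (fun p : ℝ × ℝ => fderiv ℝ (Function.uncurry f) p (0, 1)) :=
    (hf.fderiv_right (by simp)).clm_apply contDiff_const
  have he : Function.uncurry (psd f) = fun p : ℝ × ℝ => fderiv ℝ (Function.uncurry f) p (0, 1) :=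
    funext fun p => psd_eq_fderiv hf p.1 p.2
  rw [he]; exact h

lemma cont_right {f : ℝ → ℝ → ℝ} (hf : ContDiff ℝ (⊤ : ℕ∞) (Function.uncurry f)) (θ : ℝ) :
    Continuous fun ψ => f θ ψ :=
  hf.continuous.comp (continuous_const.prodMk continuous_id)

lemma hasDerivAt_int {f : ℝ → ℝ → ℝ} (hf : ContDiff ℝ (⊤ : ℕ∞) (Function.uncurry f)) (θ : ℝ) :
    HasDerivAt (intF f) (intF (ptd f) θ) θ := by
  obtain ⟨M, hM⟩ := (IsCompact.exists_bound_of_continuousOn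
    (isCompact_Icc.prod isCompact_uIcc :
      IsCompact ((Set.Icc (θ-1) (θ+1)) ×ˢ Set.uIcc (0:ℝ) (2*π)))
    (contDiff_ptd hf).continuous.continuousOn)
  have key := intervalIntegral.hasDerivAt_integral_of_dominated_loc_of_deriv_le
    (F := fun t ψ => f t ψ) (F' := fun t ψ => ptd f t ψ) (bound := fun _ => M)
    (a := (0:ℝ)) (b := 2*π) (x₀ := θ) (μ := volume) (Metric.ball_mem_nhds θ one_pos)
    (Filter.Eventually.of_forall fun x => (cont_right hf x).aestronglyMeasurable)
    ((cont_right hf θ).intervalIntegrable 0 (2*π))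
    (cont_right (contDiff_ptd hf) θ).aestronglyMeasurable
    (Filter.Eventually.of_forall fun t ht x hx => by
      have h1 : x ∈ Set.Icc (θ-1) (θ+1) := by
        have hdd := Metric.mem_ball.mp hx
        rw [Real.dist_eq] at hdd
        have := abs_lt.mp hdd
        exact ⟨by linarith [this.1], by linarith [this.2]⟩
      exact hM (x, t) ⟨h1, Set.uIoc_subset_uIcc ht⟩)
    intervalIntegrable_const
    (Filter.Eventually.of_forall fun t _ x _ => hasDerivAt_ptd hf x t)
  exact key.2

lemma integral_psd {f : ℝ → ℝ → ℝ} (hf : ContDiff ℝ (⊤ : ℕ∞) (Function.uncurry f))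
    (hper : ∀ θ ψ, f θ (ψ + 2*π) = f θ ψ) (θ : ℝ) :
    intF (psd f) θ = 0 := by
  have h := intervalIntegral.integral_eq_sub_of_hasDerivAt
    (f := fun s => f θ s) (f' := fun ψ => psd f θ ψ)
    (fun x _ => hasDerivAt_psd hf θ x)
    ((cont_right (contDiff_psd hf) θ).intervalIntegrable 0 (2*π))
  show (∫ ψ in (0:ℝ)..(2*π), psd f θ ψ) = 0
  rw [h, show (2:ℝ)*π = 0 + 2*π by ring]
  rw [hper θ 0, sub_self]

lemma ptd_per {f : ℝ → ℝ → ℝ} (hper : ∀ θ ψ, f θ (ψ + 2*π) = f θ ψ) (θ ψ : ℝ) :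
    ptd f θ (ψ + 2*π) = ptd f θ ψ := by
  unfold ptd; congr 1; funext t; exact hper t ψ

lemma psd_per {f : ℝ → ℝ → ℝ} (hper : ∀ θ ψ, f θ (ψ + 2*π) = f θ ψ) (θ ψ : ℝ) :
    psd f θ (ψ + 2*π) = psd f θ ψ := by
  show deriv (fun s => f θ s) (ψ + 2*π) = deriv (fun s => f θ s) ψ
  rw [← deriv_comp_add_const]
  congr 1; funext x; exact hper θ x

lemma integral_ptd_psd {f : ℝ → ℝ → ℝ} (hf : ContDiff ℝ (⊤ : ℕ∞) (Function.uncurry f))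
    (hper : ∀ θ ψ, f θ (ψ + 2*π) = f θ ψ) (θ : ℝ) :
    intF (ptd (psd f)) θ = 0 := by
  have h := hasDerivAt_int (contDiff_psd hf) θ
  have he : intF (psd f) = fun _ => (0:ℝ) := funext fun t => integral_psd hf hper t
  rw [he] at h
  exact h.unique (hasDerivAt_const θ 0)

/-- Lemma 6.1 (Lemma L), case ν = 0: under Condition A and Condition B, the
integral of `G` over the unit sphere vanishes. -/
theorem integral_G_sphere_eq_zero
    (c d : ℝ → ℝ → ℝ)
    (hc : ContDiff ℝ (⊤ : ℕ∞) (Function.uncurry c))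
    (hd : ContDiff ℝ (⊤ : ℕ∞) (Function.uncurry d))
    (hcA : ∀ θ ψ : ℝ, c θ (ψ + 2 * π) = c θ ψ)
    (hdA : ∀ θ ψ : ℝ, d θ (ψ + 2 * π) = d θ ψ)
    (hcB0 : (∫ ψ in (0:ℝ)..(2 * π), c 0 ψ) = 0)
    (hcBpi : (∫ ψ in (0:ℝ)..(2 * π), c π ψ) = 0) :
    IntegrableOn
        (fun θ : ℝ => Real.sin θ * ∫ ψ in (0:ℝ)..(2 * π), Gfun c d θ ψ)
        (Set.Ioo 0 π) ∧
      ∫ θ in Set.Ioo (0:ℝ) π,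
        (∫ ψ in (0:ℝ)..(2 * π), Gfun c d θ ψ) * Real.sin θ = 0 := by
  have hcA' : ∀ θ ψ : ℝ, c θ (ψ + 2*π) = c θ ψ := hcA
  have hdA' : ∀ θ ψ : ℝ, d θ (ψ + 2*π) = d θ ψ := hdA
  have hC : ∀ θ, HasDerivAt (intF c) (intF (ptd c) θ) θ := fun θ => hasDerivAt_int hc θ
  have hC1 : ∀ θ, HasDerivAt (intF (ptd c)) (intF (ptd (ptd c)) θ) θ :=
    fun θ => hasDerivAt_int (contDiff_ptd hc) θ
  have hC2d : ∀ θ, HasDerivAt (intF (ptd (ptd c))) (intF (ptd (ptd (ptd c))) θ) θ :=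
    fun θ => hasDerivAt_int (contDiff_ptd (contDiff_ptd hc)) θ
  have hCcont : Continuous (intF c) := continuous_iff_continuousAt.2 fun θ => (hC θ).continuousAt
  have hC1cont : Continuous (intF (ptd c)) :=
    continuous_iff_continuousAt.2 fun θ => (hC1 θ).continuousAt
  have hC2cont : Continuous (intF (ptd (ptd c))) :=
    continuous_iff_continuousAt.2 fun θ => (hC2d θ).continuousAt
  -- key pointwise identity on (0, π)
  have key : ∀ θ ∈ Set.Ioo (0:ℝ) π,
      (∫ ψ in (0:ℝ)..(2 * π), Gfun c d θ ψ)
        = intF (ptd (ptd c)) θ + 3 * (Real.cos θ / Real.sin θ) * intF (ptd c) θ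
            - 2 * intF c θ := by
    intro θ hθ
    have hs : Real.sin θ ≠ 0 := ne_of_gt (Real.sin_pos_of_pos_of_lt_pi hθ.1 hθ.2)
    set A := Real.cos θ / Real.sin θ with hA
    set B := (-Real.sin θ * Real.sin θ - Real.cos θ * Real.cos θ) / Real.sin θ ^ 2 with hB
    set Bc := -Real.cos θ / Real.sin θ ^ 2 with hBc
    set Ei := (Real.sin θ)⁻¹ with hEi
    have hDG : ∀ ψ : ℝ, Gfun c d θ ψ =
        ((ptd (ptd c) θ ψ + (2 * ptd c θ ψ * A + 2 * c θ ψ * B))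
          + (Bc * psd d θ ψ + Ei * ptd (psd d) θ ψ))
        + (ptd c θ ψ + 2 * c θ ψ * A + Ei * psd d θ ψ) * A
        + Ei * ((psd (ptd d) θ ψ + 2 * psd d θ ψ * A) - Ei * psd (psd c) θ ψ) := by
      intro ψ
      have a1 := hasDerivAt_ptd (contDiff_ptd hc) θ ψ
      have a2 := (hasDerivAt_ptd hc θ ψ).const_mul 2
      have a3 : HasDerivAt (fun t => Real.cos t / Real.sin t) B θ :=
        (Real.hasDerivAt_cos θ).div (Real.hasDerivAt_sin θ) hs
      have a4 : HasDerivAt (fun t => (Real.sin t)⁻¹) Bc θ := by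
        have := (Real.hasDerivAt_sin θ).inv hs
        exact this
      have a5 := hasDerivAt_ptd (contDiff_psd hd) θ ψ
      have combo := (a1.add (a2.mul a3)).add (a4.mul a5)
      have e1 : deriv (fun t => lfun c d t ψ) θ =
          (ptd (ptd c) θ ψ + (2 * ptd c θ ψ * A + 2 * c θ ψ * B))
            + (Bc * psd d θ ψ + Ei * ptd (psd d) θ ψ) := combo.deriv
      have k1 := hasDerivAt_psd (contDiff_ptd hd) θ ψ
      have k2 := ((hasDerivAt_psd hd θ ψ).const_mul 2).mul_const A
      have k3 := (hasDerivAt_psd (contDiff_psd hc) θ ψ).const_mul Ei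
      have combo2 := (k1.add k2).sub k3
      have e2 : deriv (fun s => lbarfun c d θ s) ψ =
          (psd (ptd d) θ ψ + 2 * psd d θ ψ * A) - Ei * psd (psd c) θ ψ := combo2.deriv
      have elf : lfun c d θ ψ = ptd c θ ψ + 2 * c θ ψ * A + Ei * psd d θ ψ := rfl
      show deriv (fun t => lfun c d t ψ) θ + lfun c d θ ψ * A
          + Ei * deriv (fun s => lbarfun c d θ s) ψ = _
      rw [e1, e2, elf]
    have hii : ∀ (g : ℝ → ℝ → ℝ), ContDiff ℝ (⊤ : ℕ∞) (Function.uncurry g) → ∀ k : ℝ,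
        IntervalIntegrable (fun ψ => k * g θ ψ) volume 0 (2*π) :=
      fun g hg k => (continuous_const.mul (cont_right hg θ)).intervalIntegrable 0 (2*π)
    set Kc := 2 * B + 2 * A * A with hKc
    set Kd := Bc + 3 * Ei * A with hKd
    have step1 : (∫ ψ in (0:ℝ)..(2*π), Gfun c d θ ψ)
        = ∫ ψ in (0:ℝ)..(2*π),
            (1 * ptd (ptd c) θ ψ + (3*A) * ptd c θ ψ + Kc * c θ ψ + Kd * psd d θ ψ
              + Ei * ptd (psd d) θ ψ + Ei * psd (ptd d) θ ψ + (-(Ei*Ei)) * psd (psd c) θ ψ) := by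
      apply intervalIntegral.integral_congr
      intro ψ _
      rw [hDG ψ, hKc, hKd]; ring
    rw [step1]
    have i1 := hii (ptd (ptd c)) (contDiff_ptd (contDiff_ptd hc)) 1
    have i2 := hii (ptd c) (contDiff_ptd hc) (3*A)
    have i3 := hii c hc Kc
    have i4 := hii (psd d) (contDiff_psd hd) Kd
    have i5 := hii (ptd (psd d)) (contDiff_ptd (contDiff_psd hd)) Ei
    have i6 := hii (psd (ptd d)) (contDiff_psd (contDiff_ptd hd)) Ei
    have i7 := hii (psd (psd c)) (contDiff_psd (contDiff_psd hc)) (-(Ei*Ei))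
    rw [intervalIntegral.integral_add (((((i1.add i2).add i3).add i4).add i5).add i6) i7,
        intervalIntegral.integral_add ((((i1.add i2).add i3).add i4).add i5) i6,
        intervalIntegral.integral_add (((i1.add i2).add i3).add i4) i5,
        intervalIntegral.integral_add ((i1.add i2).add i3) i4,
        intervalIntegral.integral_add (i1.add i2) i3,
        intervalIntegral.integral_add i1 i2]
    rw [intervalIntegral.integral_const_mul, intervalIntegral.integral_const_mul,
        intervalIntegral.integral_const_mul, intervalIntegral.integral_const_mul,
        intervalIntegral.integral_const_mul, intervalIntegral.integral_const_mul,
        intervalIntegral.integral_const_mul]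
    have z4 : (∫ ψ in (0:ℝ)..(2*π), psd d θ ψ) = 0 := integral_psd hd hdA' θ
    have z5 : (∫ ψ in (0:ℝ)..(2*π), ptd (psd d) θ ψ) = 0 := integral_ptd_psd hd hdA' θ
    have z6 : (∫ ψ in (0:ℝ)..(2*π), psd (ptd d) θ ψ) = 0 :=
      integral_psd (contDiff_ptd hd) (ptd_per hdA') θ
    have z7 : (∫ ψ in (0:ℝ)..(2*π), psd (psd c) θ ψ) = 0 :=
      integral_psd (contDiff_psd hc) (psd_per hcA') θ
    rw [z4, z5, z6, z7]
    have hKc2 : Kc = -2 := by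
      rw [hKc, hB, hA]
      field_simp
      nlinarith [Real.sin_sq_add_cos_sq θ]
    rw [hKc2]
    show 1 * intF (ptd (ptd c)) θ + 3 * A * intF (ptd c) θ + -2 * intF c θ + Kd * 0
        + Ei * 0 + Ei * 0 + -(Ei*Ei) * 0 = _
    ring
  -- the antiderivative H
  set H : ℝ → ℝ := fun t => Real.sin t * intF (ptd c) t + 2 * (Real.cos t * intF c t) with hHdef
  set H' : ℝ → ℝ := fun t => Real.sin t * intF (ptd (ptd c)) t
      + 3 * Real.cos t * intF (ptd c) t - 2 * Real.sin t * intF c t with hH'def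
  have hH : ∀ θ, HasDerivAt H (H' θ) θ := by
    intro θ
    have h := ((Real.hasDerivAt_sin θ).mul (hC1 θ)).add
      (((Real.hasDerivAt_cos θ).mul (hC θ)).const_mul 2)
    have : H' θ = Real.cos θ * intF (ptd c) θ + Real.sin θ * intF (ptd (ptd c)) θ
        + 2 * (-Real.sin θ * intF c θ + Real.cos θ * intF (ptd c) θ) := by
      rw [hH'def]; ring
    rw [this]
    exact h
  have hH'cont : Continuous H' := by
    rw [hH'def]
    exact ((continuous_sin.mul hC2cont).add
      ((continuous_const.mul continuous_cos).mul hC1cont)).sub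
      ((continuous_const.mul continuous_sin).mul hCcont)
  have heq : ∀ θ ∈ Set.Ioo (0:ℝ) π,
      Real.sin θ * (∫ ψ in (0:ℝ)..(2 * π), Gfun c d θ ψ) = H' θ := by
    intro θ hθ
    have hs : Real.sin θ ≠ 0 := ne_of_gt (Real.sin_pos_of_pos_of_lt_pi hθ.1 hθ.2)
    rw [key θ hθ, hH'def]
    field_simp
  constructor
  · have hint : IntegrableOn H' (Set.Ioo 0 π) :=
      (hH'cont.integrableOn_Icc).mono_set Set.Ioo_subset_Icc_self
    exact hint.congr_fun (fun θ hθ => (heq θ hθ).symm) measurableSet_Ioo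
  · have e0 : (∫ θ in Set.Ioo (0:ℝ) π, (∫ ψ in (0:ℝ)..(2 * π), Gfun c d θ ψ) * Real.sin θ)
        = ∫ θ in Set.Ioo (0:ℝ) π, H' θ := by
      apply setIntegral_congr_fun measurableSet_Ioo
      intro θ hθ
      exact (mul_comm _ _).trans (heq θ hθ)
    rw [e0, ← integral_Ioc_eq_integral_Ioo, ← intervalIntegral.integral_of_le Real.pi_pos.le]
    rw [intervalIntegral.integral_eq_sub_of_hasDerivAt (fun θ _ => hH θ)
      (hH'cont.intervalIntegrable 0 π)]
    have h1 : intF c π = 0 := hcBpi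
    have h2 : intF c 0 = 0 := hcB0
    rw [hHdef]
    simp only []
    rw [h1, h2]
    simp
end

section
/- Let c, d : ℝ² → ℝ be smooth functions of (θ, ψ) satisfying Condition A (2π-periodicity in ψ) and Condition B (∫₀^{2π} c(0,ψ) dψ = 0 and ∫₀^{2π} c(π,ψ) dψ = 0). Define on (0,π) × ℝ the functions l = ∂_θ c + 2c·cot θ + csc θ·∂_ψ d, l̄ = ∂_θ d + 2d·cot θ − csc θ·∂_ψ c, and G = ∂_θ l + l·cot θ + csc θ·∂_ψ l̄. Then the function θ ↦ sin θ · ∫₀^{2π} G(θ,ψ) sin θ cos ψ dψ extends integrably to (0,π) and ∫₀^{π} ( ∫₀^{2π} G(θ,ψ) sin θ cos ψ dψ ) sin θ dθ = 0. -/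
open Real MeasureTheory

section Helpers
open Function Metric

noncomputable def pd1 (u : ℝ → ℝ → ℝ) (θ ψ : ℝ) : ℝ := deriv (fun t => u t ψ) θ
noncomputable def pd2 (u : ℝ → ℝ → ℝ) (θ ψ : ℝ) : ℝ := deriv (fun s => u θ s) ψ

variable {u : ℝ → ℝ → ℝ}

lemma hasDerivAt_slice1 (hu : ContDiff ℝ (⊤ : ℕ∞) (uncurry u)) (θ ψ : ℝ) :
    HasDerivAt (fun t => u t ψ) ((fderiv ℝ (uncurry u) (θ, ψ)) (1, 0)) θ := by
  have h1 : HasFDerivAt (fun t : ℝ => (t, ψ))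
      ((ContinuousLinearMap.id ℝ ℝ).prod 0) θ :=
    (hasFDerivAt_id θ).prodMk (hasFDerivAt_const ψ θ)
  have h2 : HasFDerivAt (uncurry u) (fderiv ℝ (uncurry u) (θ, ψ)) (θ, ψ) :=
    (hu.differentiable (by simp) (θ, ψ)).hasFDerivAt
  have h3 := (h2.comp θ h1).hasDerivAt
  simpa [Function.comp_def] using h3

lemma hasDerivAt_slice2 (hu : ContDiff ℝ (⊤ : ℕ∞) (uncurry u)) (θ ψ : ℝ) :
    HasDerivAt (fun s => u θ s) ((fderiv ℝ (uncurry u) (θ, ψ)) (0, 1)) ψ := by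
  have h1 : HasFDerivAt (fun s : ℝ => (θ, s))
      ((0 : ℝ →L[ℝ] ℝ).prod (ContinuousLinearMap.id ℝ ℝ)) ψ :=
    (hasFDerivAt_const θ ψ).prodMk (hasFDerivAt_id ψ)
  have h2 : HasFDerivAt (uncurry u) (fderiv ℝ (uncurry u) (θ, ψ)) (θ, ψ) :=
    (hu.differentiable (by simp) (θ, ψ)).hasFDerivAt
  have h3 := (h2.comp ψ h1).hasDerivAt
  simpa [Function.comp_def] using h3

lemma pd1_eq (hu : ContDiff ℝ (⊤ : ℕ∞) (uncurry u)) (θ ψ : ℝ) :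
    pd1 u θ ψ = (fderiv ℝ (uncurry u) (θ, ψ)) (1, 0) :=
  (hasDerivAt_slice1 hu θ ψ).deriv

lemma pd2_eq (hu : ContDiff ℝ (⊤ : ℕ∞) (uncurry u)) (θ ψ : ℝ) :
    pd2 u θ ψ = (fderiv ℝ (uncurry u) (θ, ψ)) (0, 1) :=
  (hasDerivAt_slice2 hu θ ψ).deriv

lemma hasDerivAt_pd1 (hu : ContDiff ℝ (⊤ : ℕ∞) (uncurry u)) (θ ψ : ℝ) :
    HasDerivAt (fun t => u t ψ) (pd1 u θ ψ) θ :=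
  (pd1_eq hu θ ψ) ▸ hasDerivAt_slice1 hu θ ψ

lemma hasDerivAt_pd2 (hu : ContDiff ℝ (⊤ : ℕ∞) (uncurry u)) (θ ψ : ℝ) :
    HasDerivAt (fun s => u θ s) (pd2 u θ ψ) ψ :=
  (pd2_eq hu θ ψ) ▸ hasDerivAt_slice2 hu θ ψ

lemma contDiff_pd1 (hu : ContDiff ℝ (⊤ : ℕ∞) (uncurry u)) :
    ContDiff ℝ (⊤ : ℕ∞) (uncurry (pd1 u)) := by
  have h : uncurry (pd1 u) = fun p : ℝ × ℝ => (fderiv ℝ (uncurry u) p) (1, 0) := by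
    ext p; exact pd1_eq hu p.1 p.2
  rw [h]
  exact (hu.fderiv_right (by simp)).clm_apply contDiff_const

lemma contDiff_pd2 (hu : ContDiff ℝ (⊤ : ℕ∞) (uncurry u)) :
    ContDiff ℝ (⊤ : ℕ∞) (uncurry (pd2 u)) := by
  have h : uncurry (pd2 u) = fun p : ℝ × ℝ => (fderiv ℝ (uncurry u) p) (0, 1) := by
    ext p; exact pd2_eq hu p.1 p.2
  rw [h]
  exact (hu.fderiv_right (by simp)).clm_apply contDiff_const

lemma pd1_periodic (hA : ∀ θ ψ, u θ (ψ + 2 * π) = u θ ψ) (θ ψ : ℝ) :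
    pd1 u θ (ψ + 2 * π) = pd1 u θ ψ := by
  unfold pd1
  congr 1
  ext t
  exact hA t ψ

lemma pd2_periodic (hA : ∀ θ ψ, u θ (ψ + 2 * π) = u θ ψ) (θ ψ : ℝ) :
    pd2 u θ (ψ + 2 * π) = pd2 u θ ψ := by
  unfold pd2
  rw [← deriv_comp_add_const (fun s => u θ s) (2 * π) ψ]
  congr 1
  ext s
  exact hA θ s

lemma cont_slice1 {v : ℝ → ℝ → ℝ} (h : Continuous (uncurry v)) (ψ : ℝ) :
    Continuous fun t => v t ψ :=
  h.comp (continuous_id.prodMk continuous_const)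

lemma cont_slice2 {v : ℝ → ℝ → ℝ} (h : Continuous (uncurry v)) (θ : ℝ) :
    Continuous fun s => v θ s :=
  h.comp (continuous_const.prodMk continuous_id)

lemma hasDerivAt_param_integral (hu : ContDiff ℝ (⊤ : ℕ∞) (uncurry u))
    (hpd : ContDiff ℝ (⊤ : ℕ∞) (uncurry (fun θ ψ => deriv (fun t => u t ψ) θ)))
    (hder : ∀ θ ψ : ℝ, HasDerivAt (fun t => u t ψ) (deriv (fun t => u t ψ) θ) θ)
    (a b θ : ℝ) :
    HasDerivAt (fun t => ∫ s in a..b, u t s)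
      (∫ s in a..b, deriv (fun t => u t s) θ) θ := by
  set F' : ℝ → ℝ → ℝ := fun t s => deriv (fun t' => u t' s) t with hF'
  have hK : IsCompact ((Set.Icc (θ - 1) (θ + 1)) ×ˢ (Set.uIcc a b)) :=
    isCompact_Icc.prod isCompact_uIcc
  obtain ⟨C, hC⟩ := hK.exists_bound_of_continuousOn (hpd.continuous.continuousOn)
  have key := intervalIntegral.hasDerivAt_integral_of_dominated_loc_of_deriv_le
      (F := u) (F' := F') (x₀ := θ) (a := a) (b := b) (μ := volume)
      (bound := fun _ => C) (s := Metric.ball θ 1) (Metric.ball_mem_nhds θ one_pos)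
      (Filter.Eventually.of_forall fun t =>
        (cont_slice2 hu.continuous t).aestronglyMeasurable)
      ((cont_slice2 hu.continuous θ).intervalIntegrable a b)
      ((cont_slice2 hpd.continuous θ).aestronglyMeasurable)
      ?_ (intervalIntegrable_const) ?_
  · exact key.2
  · refine Filter.Eventually.of_forall fun s hs t ht => ?_
    have hmem : ((t, s) : ℝ × ℝ) ∈ (Set.Icc (θ - 1) (θ + 1)) ×ˢ (Set.uIcc a b) := by
      constructor
      · have h1 := mem_ball_iff_norm.mp ht
        have h2 : |t - θ| < 1 := by simpa [Real.norm_eq_abs] using h1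
        have h3 := abs_lt.mp h2
        rw [Set.mem_Icc]
        constructor <;> linarith [h3.1, h3.2]
      · exact Set.uIoc_subset_uIcc hs
    exact hC _ hmem
  · exact Filter.Eventually.of_forall fun s _ t _ => hder t s

end Helpers

/-- `S = sin²θ ∂_θc cos ψ + sinθ cosθ c cos ψ + sinθ ∂_ψ d cos ψ + sinθ d sin ψ`:
an antiderivative potential in `θ`. -/
noncomputable def Sfun (c d : ℝ → ℝ → ℝ) (θ ψ : ℝ) : ℝ :=
  Real.sin θ ^ 2 * pd1 c θ ψ * Real.cos ψ + Real.sin θ * Real.cos θ * c θ ψ * Real.cos ψ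
    + Real.sin θ * pd2 d θ ψ * Real.cos ψ + Real.sin θ * d θ ψ * Real.sin ψ

/-- `T = sinθ ∂_θ d cos ψ + cosθ d cos ψ − ∂_ψ c cos ψ − c sin ψ`:
an antiderivative potential in `ψ`. -/
noncomputable def Tfun (c d : ℝ → ℝ → ℝ) (θ ψ : ℝ) : ℝ :=
  Real.sin θ * pd1 d θ ψ * Real.cos ψ + Real.cos θ * d θ ψ * Real.cos ψ
    - pd2 c θ ψ * Real.cos ψ - c θ ψ * Real.sin ψ

section Main
open Function
variable {c d : ℝ → ℝ → ℝ}

lemma contDiff_S (hc : ContDiff ℝ (⊤ : ℕ∞) (uncurry c)) (hd : ContDiff ℝ (⊤ : ℕ∞) (uncurry d)) :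
    ContDiff ℝ (⊤ : ℕ∞) (uncurry (Sfun c d)) := by
  have h1 : ContDiff ℝ (⊤ : ℕ∞) (fun p : ℝ × ℝ => Real.sin p.1) :=
    Real.contDiff_sin.comp contDiff_fst
  have h2 : ContDiff ℝ (⊤ : ℕ∞) (fun p : ℝ × ℝ => Real.cos p.1) :=
    Real.contDiff_cos.comp contDiff_fst
  have h3 : ContDiff ℝ (⊤ : ℕ∞) (fun p : ℝ × ℝ => Real.sin p.2) :=
    Real.contDiff_sin.comp contDiff_snd
  have h4 : ContDiff ℝ (⊤ : ℕ∞) (fun p : ℝ × ℝ => Real.cos p.2) :=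
    Real.contDiff_cos.comp contDiff_snd
  exact (((((h1.pow 2).mul (contDiff_pd1 hc)).mul h4).add
      (((h1.mul h2).mul hc).mul h4)).add
      ((h1.mul (contDiff_pd2 hd)).mul h4)).add
      ((h1.mul hd).mul h3)

lemma contDiff_T (hc : ContDiff ℝ (⊤ : ℕ∞) (uncurry c)) (hd : ContDiff ℝ (⊤ : ℕ∞) (uncurry d)) :
    ContDiff ℝ (⊤ : ℕ∞) (uncurry (Tfun c d)) := by
  have h1 : ContDiff ℝ (⊤ : ℕ∞) (fun p : ℝ × ℝ => Real.sin p.1) :=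
    Real.contDiff_sin.comp contDiff_fst
  have h2 : ContDiff ℝ (⊤ : ℕ∞) (fun p : ℝ × ℝ => Real.cos p.1) :=
    Real.contDiff_cos.comp contDiff_fst
  have h3 : ContDiff ℝ (⊤ : ℕ∞) (fun p : ℝ × ℝ => Real.sin p.2) :=
    Real.contDiff_sin.comp contDiff_snd
  have h4 : ContDiff ℝ (⊤ : ℕ∞) (fun p : ℝ × ℝ => Real.cos p.2) :=
    Real.contDiff_cos.comp contDiff_snd
  exact ((((h1.mul (contDiff_pd1 hd)).mul h4).add ((h2.mul hd).mul h4)).sub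
      ((contDiff_pd2 hc).mul h4)).sub (hc.mul h3)

/-- The key pointwise identity: `G · (sin θ cos ψ) · sin θ = ∂_θ S + ∂_ψ T`. -/
lemma pointwise_identity (hc : ContDiff ℝ (⊤ : ℕ∞) (uncurry c)) (hd : ContDiff ℝ (⊤ : ℕ∞) (uncurry d))
    {θ : ℝ} (hs : Real.sin θ ≠ 0) (ψ : ℝ) :
    Gfun c d θ ψ * (Real.sin θ * Real.cos ψ) * Real.sin θ
      = pd1 (Sfun c d) θ ψ + pd2 (Tfun c d) θ ψ := by
  have hcc := contDiff_pd1 hc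
  have hc2 := contDiff_pd2 hc
  have hd1 := contDiff_pd1 hd
  have hd2 := contDiff_pd2 hd
  have hsin := Real.hasDerivAt_sin θ
  have hcos := Real.hasDerivAt_cos θ
  have hsψ := Real.hasDerivAt_sin ψ
  have hcψ := Real.hasDerivAt_cos ψ
  have hcot : HasDerivAt (fun t => Real.cos t / Real.sin t)
      ((-Real.sin θ * Real.sin θ - Real.cos θ * Real.cos θ) / Real.sin θ ^ 2) θ :=
    hcos.div hsin hs
  have hinv : HasDerivAt (fun t => (Real.sin t)⁻¹)
      (-(Real.cos θ) / Real.sin θ ^ 2) θ := by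
    exact hsin.inv hs
  have h2 : HasDerivAt (fun t => c t ψ) (pd1 c θ ψ) θ := hasDerivAt_pd1 hc θ ψ
  have h2d : HasDerivAt (fun t => d t ψ) (pd1 d θ ψ) θ := hasDerivAt_pd1 hd θ ψ
  have h1 : HasDerivAt (fun t => pd1 c t ψ) (pd1 (pd1 c) θ ψ) θ := hasDerivAt_pd1 hcc θ ψ
  have h3 : HasDerivAt (fun t => pd2 d t ψ) (pd1 (pd2 d) θ ψ) θ := hasDerivAt_pd1 hd2 θ ψ
  have k1 : HasDerivAt (fun s => pd1 d θ s) (pd2 (pd1 d) θ ψ) ψ := hasDerivAt_pd2 hd1 θ ψ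
  have k2 : HasDerivAt (fun s => d θ s) (pd2 d θ ψ) ψ := hasDerivAt_pd2 hd θ ψ
  have k3 : HasDerivAt (fun s => pd2 c θ s) (pd2 (pd2 c) θ ψ) ψ := hasDerivAt_pd2 hc2 θ ψ
  have kc : HasDerivAt (fun s => c θ s) (pd2 c θ ψ) ψ := hasDerivAt_pd2 hc θ ψ
  have el := ((h1.add ((h2.const_mul 2).mul hcot)).add (hinv.mul h3)).deriv
  have elb := ((k1.add ((k2.const_mul 2).mul_const (Real.cos θ / Real.sin θ))).sub
      (k3.const_mul (Real.sin θ)⁻¹)).deriv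
  have eS := (((((hsin.pow 2).mul h1).mul_const (Real.cos ψ)).add
      ((((hsin.mul hcos).mul h2).mul_const (Real.cos ψ)))).add
      (((hsin.mul h3).mul_const (Real.cos ψ)))).add
      (((hsin.mul h2d).mul_const (Real.sin ψ))) |>.deriv
  have eT := ((((k1.const_mul (Real.sin θ)).mul hcψ).add
      (((k2.const_mul (Real.cos θ)).mul hcψ))).sub (k3.mul hcψ)).sub (kc.mul hsψ) |>.deriv
  have hpy := Real.sin_sq_add_cos_sq θ
  simp only [Gfun, lfun, lbarfun, Sfun, Tfun, pd1, pd2, Pi.add_def, Pi.sub_def, Pi.mul_def, Pi.pow_def] at el elb eS eT ⊢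
  rw [el, elb, eS, eT]
  field_simp
  linear_combination (-c θ ψ * Real.cos ψ) * hpy

lemma T_periodic (hcA : ∀ θ ψ : ℝ, c θ (ψ + 2 * π) = c θ ψ)
    (hdA : ∀ θ ψ : ℝ, d θ (ψ + 2 * π) = d θ ψ) (θ ψ : ℝ) :
    Tfun c d θ (ψ + 2 * π) = Tfun c d θ ψ := by
  simp only [Tfun]
  rw [pd1_periodic hdA, pd2_periodic hcA, hcA, hdA, Real.cos_add_two_pi, Real.sin_add_two_pi]

lemma integral_pd2_T (hc : ContDiff ℝ (⊤ : ℕ∞) (uncurry c)) (hd : ContDiff ℝ (⊤ : ℕ∞) (uncurry d))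
    (hcA : ∀ θ ψ : ℝ, c θ (ψ + 2 * π) = c θ ψ)
    (hdA : ∀ θ ψ : ℝ, d θ (ψ + 2 * π) = d θ ψ) (θ : ℝ) :
    (∫ s in (0:ℝ)..(2 * π), pd2 (Tfun c d) θ s) = 0 := by
  have hT := contDiff_T hc hd
  have h := intervalIntegral.integral_eq_sub_of_hasDerivAt
      (f := fun s => Tfun c d θ s) (f' := fun s => pd2 (Tfun c d) θ s)
      (a := (0:ℝ)) (b := 2 * π)
      (fun s _ => hasDerivAt_pd2 hT θ s)
      ((cont_slice2 (contDiff_pd2 hT).continuous θ).intervalIntegrable _ _)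
  rw [h]
  show Tfun c d θ (2 * π) - Tfun c d θ 0 = 0
  have h2 : Tfun c d θ (2 * π) = Tfun c d θ 0 := by
    have := T_periodic hcA hdA θ 0
    simpa using this
  rw [h2, sub_self]

/-- Lemma 6.1 (Lemma L), case ν = 1: under Condition A and Condition B, the
integral of `G · n^1` over the unit sphere vanishes. -/
theorem integral_G_n1_sphere_eq_zero
    (c d : ℝ → ℝ → ℝ)
    (hc : ContDiff ℝ (⊤ : ℕ∞) (Function.uncurry c))
    (hd : ContDiff ℝ (⊤ : ℕ∞) (Function.uncurry d))
    (hcA : ∀ θ ψ : ℝ, c θ (ψ + 2 * π) = c θ ψ)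
    (hdA : ∀ θ ψ : ℝ, d θ (ψ + 2 * π) = d θ ψ)
    (hcB0 : (∫ ψ in (0:ℝ)..(2 * π), c 0 ψ) = 0)
    (hcBpi : (∫ ψ in (0:ℝ)..(2 * π), c π ψ) = 0) :
    IntegrableOn
        (fun θ : ℝ => Real.sin θ * ∫ ψ in (0:ℝ)..(2 * π), Gfun c d θ ψ * (Real.sin θ * Real.cos ψ))
        (Set.Ioo 0 π) ∧
      ∫ θ in Set.Ioo (0:ℝ) π,
        (∫ ψ in (0:ℝ)..(2 * π), Gfun c d θ ψ * (Real.sin θ * Real.cos ψ)) * Real.sin θ = 0 := by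
  have hS := contDiff_S hc hd
  have hT := contDiff_T hc hd
  set K : ℝ → ℝ := fun t => ∫ ψ in (0:ℝ)..(2 * π), pd1 (Sfun c d) t ψ with hKdef
  have hKcont : Continuous K := by
    apply intervalIntegral.continuous_parametric_intervalIntegral_of_continuous'
    exact (contDiff_pd1 hS).continuous
  have hHd : ∀ t : ℝ,
      HasDerivAt (fun t' => ∫ ψ in (0:ℝ)..(2 * π), Sfun c d t' ψ) (K t) t := fun t =>
    hasDerivAt_param_integral hS (contDiff_pd1 hS)
      (fun θ ψ => hasDerivAt_pd1 hS θ ψ) 0 (2 * π) t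
  have key1 : ∀ θ ∈ Set.Ioo (0:ℝ) π,
      (∫ ψ in (0:ℝ)..(2 * π), Gfun c d θ ψ * (Real.sin θ * Real.cos ψ)) * Real.sin θ = K θ := by
    intro θ hθ
    have hs : Real.sin θ ≠ 0 := (Real.sin_pos_of_pos_of_lt_pi hθ.1 hθ.2).ne'
    have h1 : (∫ ψ in (0:ℝ)..(2 * π), Gfun c d θ ψ * (Real.sin θ * Real.cos ψ)) * Real.sin θ
        = ∫ ψ in (0:ℝ)..(2 * π), Gfun c d θ ψ * (Real.sin θ * Real.cos ψ) * Real.sin θ :=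
      (intervalIntegral.integral_mul_const _ _).symm
    rw [h1]
    rw [intervalIntegral.integral_congr
      (g := fun ψ => pd1 (Sfun c d) θ ψ + pd2 (Tfun c d) θ ψ)
      (fun ψ _ => pointwise_identity hc hd hs ψ)]
    rw [intervalIntegral.integral_add
      ((cont_slice2 (contDiff_pd1 hS).continuous θ).intervalIntegrable _ _)
      ((cont_slice2 (contDiff_pd2 hT).continuous θ).intervalIntegrable _ _)]
    rw [integral_pd2_T hc hd hcA hdA θ, add_zero]
  have hKint : IntegrableOn K (Set.Ioo 0 π) :=
    (hKcont.integrableOn_Icc).mono_set Set.Ioo_subset_Icc_self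
  constructor
  · apply hKint.congr_fun ?_ measurableSet_Ioo
    intro θ hθ
    rw [← key1 θ hθ, mul_comm]
  · have e : ∫ θ in Set.Ioo (0:ℝ) π,
        (∫ ψ in (0:ℝ)..(2 * π), Gfun c d θ ψ * (Real.sin θ * Real.cos ψ)) * Real.sin θ
        = ∫ θ in Set.Ioo (0:ℝ) π, K θ :=
      setIntegral_congr_fun measurableSet_Ioo key1
    rw [e, ← MeasureTheory.integral_Ioc_eq_integral_Ioo,
      ← intervalIntegral.integral_of_le Real.pi_pos.le]
    rw [intervalIntegral.integral_eq_sub_of_hasDerivAt (fun t _ => hHd t)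
      (hKcont.intervalIntegrable 0 π)]
    have h0 : (∫ ψ in (0:ℝ)..(2 * π), Sfun c d 0 ψ) = 0 := by
      have hz : ∀ ψ : ℝ, Sfun c d 0 ψ = 0 := fun ψ => by simp [Sfun]
      simp [hz]
    have hπ : (∫ ψ in (0:ℝ)..(2 * π), Sfun c d π ψ) = 0 := by
      have hz : ∀ ψ : ℝ, Sfun c d π ψ = 0 := fun ψ => by simp [Sfun]
      simp [hz]
    rw [h0, hπ, sub_self]

end Main
end

section
/- Let c, d : ℝ² → ℝ be smooth functions of (θ, ψ) satisfying Condition A (2π-periodicity in ψ) and Condition B (∫₀^{2π} c(0,ψ) dψ = 0 and ∫₀^{2π} c(π,ψ) dψ = 0). Define on (0,π) × ℝ the functions l = ∂_θ c + 2c·cot θ + csc θ·∂_ψ d, l̄ = ∂_θ d + 2d·cot θ − csc θ·∂_ψ c, and G = ∂_θ l + l·cot θ + csc θ·∂_ψ l̄. Then the function θ ↦ sin θ · ∫₀^{2π} G(θ,ψ) sin θ sin ψ dψ extends integrably to (0,π) and ∫₀^{π} ( ∫₀^{2π} G(θ,ψ) sin θ sin ψ dψ ) sin θ dθ = 0. 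-/
open Real MeasureTheory

namespace LemmaLAux

open Function intervalIntegral

noncomputable def pt (f : ℝ → ℝ → ℝ) (θ ψ : ℝ) : ℝ := deriv (fun t => f t ψ) θ
noncomputable def ps (f : ℝ → ℝ → ℝ) (θ ψ : ℝ) : ℝ := deriv (fun s => f θ s) ψ

variable {f : ℝ → ℝ → ℝ}

lemma hasDerivAt_pt (hf : ContDiff ℝ (⊤ : ℕ∞) (uncurry f)) (θ ψ : ℝ) :
    HasDerivAt (fun t => f t ψ) (fderiv ℝ (uncurry f) (θ, ψ) (1, 0)) θ :=
  ((hf.differentiable (by simp) (θ, ψ)).hasFDerivAt.comp_hasDerivAt (l := uncurry f) θ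
    ((hasDerivAt_id θ).prodMk (hasDerivAt_const θ ψ)))

lemma pt_eq (hf : ContDiff ℝ (⊤ : ℕ∞) (uncurry f)) (θ ψ : ℝ) :
    pt f θ ψ = fderiv ℝ (uncurry f) (θ, ψ) (1, 0) :=
  (hasDerivAt_pt hf θ ψ).deriv

lemma hasDerivAt_pt' (hf : ContDiff ℝ (⊤ : ℕ∞) (uncurry f)) (θ ψ : ℝ) :
    HasDerivAt (fun t => f t ψ) (pt f θ ψ) θ := by
  rw [pt_eq hf]; exact hasDerivAt_pt hf θ ψ

lemma hasDerivAt_ps (hf : ContDiff ℝ (⊤ : ℕ∞) (uncurry f)) (θ ψ : ℝ) :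
    HasDerivAt (fun s => f θ s) (fderiv ℝ (uncurry f) (θ, ψ) (0, 1)) ψ :=
  ((hf.differentiable (by simp) (θ, ψ)).hasFDerivAt.comp_hasDerivAt ψ
    ((hasDerivAt_const ψ θ).prodMk (hasDerivAt_id ψ)))

lemma ps_eq (hf : ContDiff ℝ (⊤ : ℕ∞) (uncurry f)) (θ ψ : ℝ) :
    ps f θ ψ = fderiv ℝ (uncurry f) (θ, ψ) (0, 1) :=
  (hasDerivAt_ps hf θ ψ).deriv

lemma hasDerivAt_ps' (hf : ContDiff ℝ (⊤ : ℕ∞) (uncurry f)) (θ ψ : ℝ) :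
    HasDerivAt (fun s => f θ s) (ps f θ ψ) ψ := by
  rw [ps_eq hf]; exact hasDerivAt_ps hf θ ψ

lemma contDiff_pt (hf : ContDiff ℝ (⊤ : ℕ∞) (uncurry f)) : ContDiff ℝ (⊤ : ℕ∞) (uncurry (pt f)) := by
  have : uncurry (pt f) = fun p : ℝ × ℝ => fderiv ℝ (uncurry f) p (1, 0) := by
    funext p; exact pt_eq hf p.1 p.2
  rw [this]
  exact (hf.fderiv_right (by simp)).clm_apply contDiff_const

lemma contDiff_ps (hf : ContDiff ℝ (⊤ : ℕ∞) (uncurry f)) : ContDiff ℝ (⊤ : ℕ∞) (uncurry (ps f)) := by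
  have : uncurry (ps f) = fun p : ℝ × ℝ => fderiv ℝ (uncurry f) p (0, 1) := by
    funext p; exact ps_eq hf p.1 p.2
  rw [this]
  exact (hf.fderiv_right (by simp)).clm_apply contDiff_const

lemma pt_ps_comm (hf : ContDiff ℝ (⊤ : ℕ∞) (uncurry f)) (θ ψ : ℝ) :
    pt (ps f) θ ψ = ps (pt f) θ ψ := by
  set F := uncurry f
  set f' := fderiv ℝ F with hf'def
  have hF' : ∀ y, HasFDerivAt F (f' y) y := fun y => (hf.differentiable (by simp) y).hasFDerivAt
  have hdf' : HasFDerivAt f' (fderiv ℝ f' (θ, ψ)) (θ, ψ) :=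
    (((hf.fderiv_right (m := (⊤ : ℕ∞)) (by simp)).differentiable (by simp)) (θ, ψ)).hasFDerivAt
  set f'' := fderiv ℝ f' (θ, ψ)
  have hsymm := second_derivative_symmetric hF' hdf'
  have key : ∀ v w : ℝ × ℝ, fderiv ℝ (fun p => f' p v) (θ, ψ) w = f'' w v := by
    intro v w
    have h1 : HasFDerivAt (fun p => f' p v)
        ((ContinuousLinearMap.apply ℝ ℝ v).comp f'') (θ, ψ) :=
      (ContinuousLinearMap.apply ℝ ℝ v).hasFDerivAt.comp (θ, ψ) hdf'
    rw [h1.fderiv]; rfl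
  have e1 : uncurry (ps f) = fun p : ℝ × ℝ => f' p (0, 1) := by
    funext p; exact ps_eq hf p.1 p.2
  have e2 : uncurry (pt f) = fun p : ℝ × ℝ => f' p (1, 0) := by
    funext p; exact pt_eq hf p.1 p.2
  have l1 : pt (ps f) θ ψ = f'' (1, 0) (0, 1) := by
    rw [pt_eq (contDiff_ps hf), e1, key]
  have l2 : ps (pt f) θ ψ = f'' (0, 1) (1, 0) := by
    rw [ps_eq (contDiff_pt hf), e2, key]
  rw [l1, l2, hsymm]

lemma per_pt (hper : ∀ θ ψ, f θ (ψ + 2 * π) = f θ ψ) (θ ψ : ℝ) :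
    pt f θ (ψ + 2 * π) = pt f θ ψ := by
  unfold pt; congr 1; funext t; exact hper t ψ

lemma per_ps (hper : ∀ θ ψ, f θ (ψ + 2 * π) = f θ ψ) (θ ψ : ℝ) :
    ps f θ (ψ + 2 * π) = ps f θ ψ := by
  unfold ps
  have h1 : deriv (fun s => f θ s) (ψ + 2 * π) = deriv (fun y => f θ (y + 2 * π)) ψ :=
    (deriv_comp_add_const _ _ _).symm
  rw [h1]
  congr 1
  funext y
  exact hper θ y

/-- Integration by parts against `sin`. -/
lemma ibp_sin {g g' : ℝ → ℝ} (hg : ∀ x, HasDerivAt g (g' x) x) (hg' : Continuous g')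
    (hper : g (2 * π) = g 0) :
    ∫ ψ in (0:ℝ)..(2 * π), g' ψ * Real.sin ψ = -∫ ψ in (0:ℝ)..(2 * π), g ψ * Real.cos ψ := by
  have h := intervalIntegral.integral_mul_deriv_eq_deriv_mul (a := (0:ℝ)) (b := 2 * π)
    (u := g) (v := Real.sin) (u' := g') (v' := Real.cos)
    (fun x _ => hg x) (fun x _ => Real.hasDerivAt_sin x)
    (hg'.intervalIntegrable _ _) (Real.continuous_cos.intervalIntegrable _ _)
  rw [Real.sin_zero, Real.sin_two_pi] at h
  linarith [h]

/-- Integration by parts against `cos`. -/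
lemma ibp_cos {g g' : ℝ → ℝ} (hg : ∀ x, HasDerivAt g (g' x) x) (hg' : Continuous g')
    (hper : g (2 * π) = g 0) :
    ∫ ψ in (0:ℝ)..(2 * π), g' ψ * Real.cos ψ = ∫ ψ in (0:ℝ)..(2 * π), g ψ * Real.sin ψ := by
  have h := intervalIntegral.integral_mul_deriv_eq_deriv_mul (a := (0:ℝ)) (b := 2 * π)
    (u := g) (v := Real.cos) (u' := g') (v' := fun x => -Real.sin x)
    (fun x _ => hg x) (fun x _ => Real.hasDerivAt_cos x)
    (hg'.intervalIntegrable _ _) ((Real.continuous_sin.neg).intervalIntegrable _ _)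
  rw [Real.cos_zero, Real.cos_two_pi, hper] at h
  have h2 : (∫ ψ in (0:ℝ)..(2 * π), g ψ * -Real.sin ψ)
      = -∫ ψ in (0:ℝ)..(2 * π), g ψ * Real.sin ψ := by
    rw [← intervalIntegral.integral_neg]; congr 1; funext x; ring
  rw [h2] at h
  linarith [h]

/-- Differentiation under the integral sign. -/
lemma hasDerivAt_param {f f' : ℝ → ℝ → ℝ}
    (hf : Continuous (uncurry f)) (hf' : Continuous (uncurry f'))
    (hdf : ∀ θ ψ, HasDerivAt (fun t => f t ψ) (f' θ ψ) θ)
    {w : ℝ → ℝ} (hw : Continuous w) (θ₀ : ℝ) :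
    HasDerivAt (fun θ => ∫ ψ in (0:ℝ)..(2 * π), f θ ψ * w ψ)
      (∫ ψ in (0:ℝ)..(2 * π), f' θ₀ ψ * w ψ) θ₀ := by
  have hK : IsCompact (Set.Icc (θ₀ - 1) (θ₀ + 1) ×ˢ Set.Icc (0:ℝ) (2 * π)) :=
    isCompact_Icc.prod isCompact_Icc
  have hcont : Continuous fun p : ℝ × ℝ => f' p.1 p.2 * w p.2 :=
    hf'.mul (hw.comp continuous_snd)
  obtain ⟨M, hM⟩ := hK.exists_bound_of_continuousOn hcont.continuousOn
  have main := intervalIntegral.hasDerivAt_integral_of_dominated_loc_of_deriv_le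
    (F := fun θ ψ => f θ ψ * w ψ) (F' := fun θ ψ => f' θ ψ * w ψ)
    (μ := volume) (x₀ := θ₀) (a := (0:ℝ)) (b := 2 * π) (bound := fun _ => M) (s := Metric.ball θ₀ 1)
    (Metric.ball_mem_nhds θ₀ one_pos)
    (Filter.Eventually.of_forall fun θ =>
      ((hf.comp (Continuous.prodMk_right θ)).mul hw).aestronglyMeasurable)
    (((hf.comp (Continuous.prodMk_right θ₀)).mul hw).intervalIntegrable _ _)
    ((hf'.comp (Continuous.prodMk_right θ₀)).mul hw).aestronglyMeasurable
    (Filter.Eventually.of_forall fun ψ hψ θ hθ => by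
      have hψ' : ψ ∈ Set.Icc (0:ℝ) (2 * π) := by
        rw [Set.uIoc_of_le (by positivity)] at hψ
        exact ⟨hψ.1.le, hψ.2⟩
      have hθ' : θ ∈ Set.Icc (θ₀ - 1) (θ₀ + 1) := by
        rw [Metric.mem_ball, Real.dist_eq, abs_lt] at hθ
        constructor <;> linarith [hθ.1, hθ.2]
      exact hM (θ, ψ) ⟨hθ', hψ'⟩)
    (intervalIntegrable_const)
    (Filter.Eventually.of_forall fun ψ _ θ _ => (hdf θ ψ).mul_const (w ψ))
  exact main.2

/-- `A_f(θ) = ∫ f θ ψ sin ψ dψ`. -/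
noncomputable def AA (f : ℝ → ℝ → ℝ) (θ : ℝ) : ℝ :=
  ∫ ψ in (0:ℝ)..(2 * π), f θ ψ * Real.sin ψ

/-- `B_f(θ) = ∫ f θ ψ cos ψ dψ`. -/
noncomputable def BB (f : ℝ → ℝ → ℝ) (θ : ℝ) : ℝ :=
  ∫ ψ in (0:ℝ)..(2 * π), f θ ψ * Real.cos ψ

lemma hasDerivAt_AA (hf : ContDiff ℝ (⊤ : ℕ∞) (uncurry f)) (θ : ℝ) :
    HasDerivAt (AA f) (AA (pt f) θ) θ :=
  hasDerivAt_param hf.continuous (contDiff_pt hf).continuous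
    (hasDerivAt_pt' hf) Real.continuous_sin θ

lemma hasDerivAt_BB (hf : ContDiff ℝ (⊤ : ℕ∞) (uncurry f)) (θ : ℝ) :
    HasDerivAt (BB f) (BB (pt f) θ) θ :=
  hasDerivAt_param hf.continuous (contDiff_pt hf).continuous
    (hasDerivAt_pt' hf) Real.continuous_cos θ

lemma cont_AA (hf : ContDiff ℝ (⊤ : ℕ∞) (uncurry f)) : Continuous (AA f) :=
  continuous_iff_continuousAt.2 fun θ => (hasDerivAt_AA hf θ).continuousAt

lemma cont_BB (hf : ContDiff ℝ (⊤ : ℕ∞) (uncurry f)) : Continuous (BB f) :=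
  continuous_iff_continuousAt.2 fun θ => (hasDerivAt_BB hf θ).continuousAt

lemma AA_ps (hf : ContDiff ℝ (⊤ : ℕ∞) (uncurry f)) (hper : ∀ θ ψ, f θ (ψ + 2 * π) = f θ ψ) (θ : ℝ) :
    AA (ps f) θ = -(BB f θ) := by
  apply ibp_sin (hasDerivAt_ps' hf θ)
  · exact (contDiff_ps hf).continuous.comp (Continuous.prodMk_right θ)
  · have := hper θ 0; rwa [zero_add] at this

lemma BB_ps (hf : ContDiff ℝ (⊤ : ℕ∞) (uncurry f)) (hper : ∀ θ ψ, f θ (ψ + 2 * π) = f θ ψ) (θ : ℝ) :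
    BB (ps f) θ = AA f θ := by
  apply ibp_cos (hasDerivAt_ps' hf θ)
  · exact (contDiff_ps hf).continuous.comp (Continuous.prodMk_right θ)
  · have := hper θ 0; rwa [zero_add] at this

/-- `H(θ) = sin²θ A₁ + sinθ cosθ A − 2 sinθ B`. -/
noncomputable def HH (c d : ℝ → ℝ → ℝ) (θ : ℝ) : ℝ :=
  Real.sin θ ^ 2 * AA (pt c) θ + Real.sin θ * Real.cos θ * AA c θ
    - 2 * (Real.sin θ * BB d θ)

/-- The derivative of `H`. -/
noncomputable def EE (c d : ℝ → ℝ → ℝ) (θ : ℝ) : ℝ :=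
  Real.sin θ ^ 2 * AA (pt (pt c)) θ + 3 * (Real.sin θ * Real.cos θ) * AA (pt c) θ
    + (1 - 2 * Real.sin θ ^ 2) * AA c θ - 2 * Real.cos θ * BB d θ
    - 2 * Real.sin θ * BB (pt d) θ

lemma hasDerivAt_HH {c d : ℝ → ℝ → ℝ}
    (hc : ContDiff ℝ (⊤ : ℕ∞) (uncurry c)) (hd : ContDiff ℝ (⊤ : ℕ∞) (uncurry d)) (θ : ℝ) :
    HasDerivAt (HH c d) (EE c d θ) θ := by
  have h1 := ((Real.hasDerivAt_sin θ).pow 2).mul (hasDerivAt_AA (contDiff_pt hc) θ)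
  have h2 := ((Real.hasDerivAt_sin θ).mul (Real.hasDerivAt_cos θ)).mul (hasDerivAt_AA hc θ)
  have h3 := (((Real.hasDerivAt_sin θ).mul (hasDerivAt_BB hd θ)).const_mul 2)
  have h := (h1.add h2).sub h3
  refine h.congr_deriv ?_; symm
  simp only [Pi.pow_apply, Pi.mul_apply]
  unfold EE
  push_cast
  linear_combination (-AA c θ) * Real.sin_sq_add_cos_sq θ

lemma cont_EE {c d : ℝ → ℝ → ℝ}
    (hc : ContDiff ℝ (⊤ : ℕ∞) (uncurry c)) (hd : ContDiff ℝ (⊤ : ℕ∞) (uncurry d)) :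
    Continuous (EE c d) := by
  unfold EE
  exact (((((Real.continuous_sin.pow 2).mul (cont_AA (contDiff_pt (contDiff_pt hc)))).add
    ((continuous_const.mul (Real.continuous_sin.mul Real.continuous_cos)).mul
      (cont_AA (contDiff_pt hc)))).add
    (((continuous_const.sub (continuous_const.mul (Real.continuous_sin.pow 2)))).mul
      (cont_AA hc))).sub
    ((continuous_const.mul Real.continuous_cos).mul (cont_BB hd))).sub
    ((continuous_const.mul Real.continuous_sin).mul (cont_BB (contDiff_pt hd)))

end LemmaLAux

namespace LemmaLAux

open Function intervalIntegral

lemma key_eq {c d : ℝ → ℝ → ℝ}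
    (hc : ContDiff ℝ (⊤ : ℕ∞) (uncurry c)) (hd : ContDiff ℝ (⊤ : ℕ∞) (uncurry d))
    (hcA : ∀ θ ψ : ℝ, c θ (ψ + 2 * π) = c θ ψ)
    (hdA : ∀ θ ψ : ℝ, d θ (ψ + 2 * π) = d θ ψ)
    {θ : ℝ} (hθ : θ ∈ Set.Ioo 0 π) :
    Real.sin θ * ∫ ψ in (0:ℝ)..(2 * π), Gfun c d θ ψ * (Real.sin θ * Real.sin ψ)
      = EE c d θ := by
  have hs : Real.sin θ ≠ 0 := ne_of_gt (Real.sin_pos_of_pos_of_lt_pi hθ.1 hθ.2)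
  -- pointwise identity
  have hpt : ∀ ψ : ℝ, Real.sin θ * (Gfun c d θ ψ * (Real.sin θ * Real.sin ψ))
      = Real.sin θ ^ 2 * (pt (pt c) θ ψ * Real.sin ψ)
        + 3 * (Real.sin θ * Real.cos θ) * (pt c θ ψ * Real.sin ψ)
        + (-2 * Real.sin θ ^ 2) * (c θ ψ * Real.sin ψ)
        + 2 * Real.cos θ * (ps d θ ψ * Real.sin ψ)
        + 2 * Real.sin θ * (ps (pt d) θ ψ * Real.sin ψ)
        - ps (ps c) θ ψ * Real.sin ψ := by
    intro ψ
    have hcot : HasDerivAt (fun t => Real.cos t / Real.sin t)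
        ((-Real.sin θ * Real.sin θ - Real.cos θ * Real.cos θ) / Real.sin θ ^ 2) θ :=
      (Real.hasDerivAt_cos θ).div (Real.hasDerivAt_sin θ) hs
    have hinv : HasDerivAt (fun t => (Real.sin t)⁻¹) (-Real.cos θ / Real.sin θ ^ 2) θ :=
      (Real.hasDerivAt_sin θ).inv hs
    have hDl : HasDerivAt (fun t => lfun c d t ψ)
        (pt (pt c) θ ψ
          + (2 * pt c θ ψ * (Real.cos θ / Real.sin θ)
            + 2 * c θ ψ * ((-Real.sin θ * Real.sin θ - Real.cos θ * Real.cos θ) / Real.sin θ ^ 2))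
          + (-Real.cos θ / Real.sin θ ^ 2 * ps d θ ψ
            + (Real.sin θ)⁻¹ * pt (ps d) θ ψ)) θ :=
      ((hasDerivAt_pt' (contDiff_pt hc) θ ψ).add
        (((hasDerivAt_pt' hc θ ψ).const_mul 2).mul hcot)).add
        (hinv.mul (hasDerivAt_pt' (contDiff_ps hd) θ ψ))
    have hDlb : HasDerivAt (fun s => lbarfun c d θ s)
        (ps (pt d) θ ψ + 2 * ps d θ ψ * (Real.cos θ / Real.sin θ)
          - (Real.sin θ)⁻¹ * ps (ps c) θ ψ) ψ :=
      ((hasDerivAt_ps' (contDiff_pt hd) θ ψ).add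
        (((hasDerivAt_ps' hd θ ψ).const_mul 2).mul_const _)).sub
        ((hasDerivAt_ps' (contDiff_ps hc) θ ψ).const_mul _)
    have e1 := hDl.deriv
    have e2 := hDlb.deriv
    unfold Gfun
    rw [e1, e2]
    unfold lfun
    rw [show deriv (fun t => c t ψ) θ = pt c θ ψ from rfl,
      show deriv (fun s => d θ s) ψ = ps d θ ψ from rfl,
      pt_ps_comm hd θ ψ]
    field_simp
    ring
  -- continuity helpers
  have contsl : ∀ {g : ℝ → ℝ → ℝ}, ContDiff ℝ (⊤ : ℕ∞) (uncurry g) →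
      Continuous (fun ψ => g θ ψ) := fun hg => hg.continuous.comp (Continuous.prodMk_right θ)
  have i1 : IntervalIntegrable
      (fun ψ => Real.sin θ ^ 2 * (pt (pt c) θ ψ * Real.sin ψ)) volume 0 (2 * π) :=
    (continuous_const.mul ((contsl (contDiff_pt (contDiff_pt hc))).mul
      Real.continuous_sin)).intervalIntegrable _ _
  have i2 : IntervalIntegrable
      (fun ψ => 3 * (Real.sin θ * Real.cos θ) * (pt c θ ψ * Real.sin ψ)) volume 0 (2 * π) :=
    (continuous_const.mul ((contsl (contDiff_pt hc)).mul
      Real.continuous_sin)).intervalIntegrable _ _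
  have i3 : IntervalIntegrable
      (fun ψ => (-2 * Real.sin θ ^ 2) * (c θ ψ * Real.sin ψ)) volume 0 (2 * π) :=
    (continuous_const.mul ((contsl hc).mul Real.continuous_sin)).intervalIntegrable _ _
  have i4 : IntervalIntegrable
      (fun ψ => 2 * Real.cos θ * (ps d θ ψ * Real.sin ψ)) volume 0 (2 * π) :=
    (continuous_const.mul ((contsl (contDiff_ps hd)).mul
      Real.continuous_sin)).intervalIntegrable _ _
  have i5 : IntervalIntegrable
      (fun ψ => 2 * Real.sin θ * (ps (pt d) θ ψ * Real.sin ψ)) volume 0 (2 * π) :=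
    (continuous_const.mul ((contsl (contDiff_ps (contDiff_pt hd))).mul
      Real.continuous_sin)).intervalIntegrable _ _
  have i6 : IntervalIntegrable
      (fun ψ => ps (ps c) θ ψ * Real.sin ψ) volume 0 (2 * π) :=
    ((contsl (contDiff_ps (contDiff_ps hc))).mul Real.continuous_sin).intervalIntegrable _ _
  calc Real.sin θ * ∫ ψ in (0:ℝ)..(2 * π), Gfun c d θ ψ * (Real.sin θ * Real.sin ψ)
      = ∫ ψ in (0:ℝ)..(2 * π),
          Real.sin θ * (Gfun c d θ ψ * (Real.sin θ * Real.sin ψ)) :=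
        (intervalIntegral.integral_const_mul _ _).symm
    _ = ∫ ψ in (0:ℝ)..(2 * π),
          (Real.sin θ ^ 2 * (pt (pt c) θ ψ * Real.sin ψ)
            + 3 * (Real.sin θ * Real.cos θ) * (pt c θ ψ * Real.sin ψ)
            + (-2 * Real.sin θ ^ 2) * (c θ ψ * Real.sin ψ)
            + 2 * Real.cos θ * (ps d θ ψ * Real.sin ψ)
            + 2 * Real.sin θ * (ps (pt d) θ ψ * Real.sin ψ)
            - ps (ps c) θ ψ * Real.sin ψ) :=
        intervalIntegral.integral_congr (fun ψ _ => hpt ψ)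
    _ = Real.sin θ ^ 2 * AA (pt (pt c)) θ
          + 3 * (Real.sin θ * Real.cos θ) * AA (pt c) θ
          + (-2 * Real.sin θ ^ 2) * AA c θ
          + 2 * Real.cos θ * AA (ps d) θ
          + 2 * Real.sin θ * AA (ps (pt d)) θ
          - AA (ps (ps c)) θ := by
        rw [intervalIntegral.integral_sub ((((i1.add i2).add i3).add i4).add i5) i6,
          intervalIntegral.integral_add (((i1.add i2).add i3).add i4) i5,
          intervalIntegral.integral_add ((i1.add i2).add i3) i4,
          intervalIntegral.integral_add (i1.add i2) i3,
          intervalIntegral.integral_add i1 i2,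
          intervalIntegral.integral_const_mul, intervalIntegral.integral_const_mul,
          intervalIntegral.integral_const_mul, intervalIntegral.integral_const_mul,
          intervalIntegral.integral_const_mul]
        rfl
    _ = EE c d θ := by
        rw [AA_ps hd hdA, AA_ps (contDiff_pt hd) (per_pt hdA),
          AA_ps (contDiff_ps hc) (per_ps hcA), BB_ps hc hcA]
        unfold EE
        ring

end LemmaLAux

open LemmaLAux in
/-- Lemma 6.1 (Lemma L), case ν = 2: under Condition A and Condition B, the
integral of `G · n^2` over the unit sphere vanishes. -/
theorem integral_G_n2_sphere_eq_zero
    (c d : ℝ → ℝ → ℝ)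
    (hc : ContDiff ℝ (⊤ : ℕ∞) (Function.uncurry c))
    (hd : ContDiff ℝ (⊤ : ℕ∞) (Function.uncurry d))
    (hcA : ∀ θ ψ : ℝ, c θ (ψ + 2 * π) = c θ ψ)
    (hdA : ∀ θ ψ : ℝ, d θ (ψ + 2 * π) = d θ ψ)
    (hcB0 : (∫ ψ in (0:ℝ)..(2 * π), c 0 ψ) = 0)
    (hcBpi : (∫ ψ in (0:ℝ)..(2 * π), c π ψ) = 0) :
    IntegrableOn
        (fun θ : ℝ => Real.sin θ * ∫ ψ in (0:ℝ)..(2 * π), Gfun c d θ ψ * (Real.sin θ * Real.sin ψ))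
        (Set.Ioo 0 π) ∧
      ∫ θ in Set.Ioo (0:ℝ) π,
        (∫ ψ in (0:ℝ)..(2 * π), Gfun c d θ ψ * (Real.sin θ * Real.sin ψ)) * Real.sin θ = 0 := by
  have hEc : Continuous (EE c d) := cont_EE hc hd
  have hEint : IntegrableOn (EE c d) (Set.Ioo 0 π) :=
    ((hEc.intervalIntegrable 0 π).1).mono_set Set.Ioo_subset_Ioc_self
  constructor
  · exact hEint.congr_fun (fun θ hθ => (key_eq hc hd hcA hdA hθ).symm) measurableSet_Ioo
  · have h1 : ∫ θ in Set.Ioo (0:ℝ) π,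
        (∫ ψ in (0:ℝ)..(2 * π), Gfun c d θ ψ * (Real.sin θ * Real.sin ψ)) * Real.sin θ
        = ∫ θ in Set.Ioo (0:ℝ) π, EE c d θ := by
      apply setIntegral_congr_fun measurableSet_Ioo
      intro θ hθ
      show (∫ ψ in (0:ℝ)..(2 * π), Gfun c d θ ψ * (Real.sin θ * Real.sin ψ)) * Real.sin θ = EE c d θ
      rw [mul_comm _ (Real.sin θ)]
      exact key_eq hc hd hcA hdA hθ
    rw [h1]
    have h2 : ∫ θ in Set.Ioo (0:ℝ) π, EE c d θ = ∫ θ in (0:ℝ)..π, EE c d θ := by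
      rw [intervalIntegral.integral_of_le Real.pi_pos.le, integral_Ioc_eq_integral_Ioo]
    rw [h2, intervalIntegral.integral_eq_sub_of_hasDerivAt
      (fun θ _ => hasDerivAt_HH hc hd θ) (hEc.intervalIntegrable _ _)]
    unfold HH
    simp [Real.sin_pi]
end

section
/- Let 𝓜 : ℝ × S² → ℝ be a continuous function which is differentiable in its first variable, whose partial derivative ∂_u 𝓜 is continuous on ℝ × S², and which satisfies ∂_u 𝓜(u,ω) ≤ 0 for all (u,ω) ∈ ℝ × S². Define the modified Bondi energy-momentum 𝐦_ν(u) = (1/(4π)) ∫_{S²} 𝓜(u,ω) n^ν(ω) dS(ω) for ν = 0,1,2,3. Then the function u ↦ 𝐦₀(u) − √(𝐦₁(u)² + 𝐦₂(u)² + 𝐦₃(u)²) is nonincreasing (antitone) on ℝ. -/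
/-!
For `u ≤ v` the mass aspect decreases pointwise, so `𝓜(u,·) - 𝓜(v,·)` is a nonnegative weight on
the sphere. Since `|ω| = 1` there, the momentum change `∫ (𝓜(u,ω) - 𝓜(v,ω)) ω dS` has norm at most
the energy change `∫ (𝓜(u,ω) - 𝓜(v,ω)) dS`, and the triangle inequality
`|𝐦(u)| - |𝐦(v)| ≤ |𝐦(u) - 𝐦(v)|` gives `𝐦₀(u) - |𝐦(u)| ≥ 𝐦₀(v) - |𝐦(v)|`.
-/


open MeasureTheory Real Metric

section WeightedIntegral

variable {α E : Type*} [MeasurableSpace α] {μ : Measure α}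
  [NormedAddCommGroup E] [NormedSpace ℝ E]

theorem norm_integral_smul_le_integral_s9 {g : α → ℝ} {n : α → E} (hg : Integrable g μ)
    (hg_nonneg : ∀ᵐ x ∂μ, 0 ≤ g x) (hn : ∀ᵐ x ∂μ, ‖n x‖ ≤ 1) :
    ‖∫ x, g x • n x ∂μ‖ ≤ ∫ x, g x ∂μ := by
  refine norm_integral_le_of_norm_le hg ?_
  filter_upwards [hg_nonneg, hn] with x hgx hnx
  rw [norm_smul, Real.norm_of_nonneg hgx]
  exact mul_le_of_le_one_right hgx hnx

theorem antitone_integral_sub_norm_integral_smul {M : ℝ → α → ℝ} {n : α → E}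
    (hM : ∀ t, Integrable (M t) μ) (hMn : ∀ t, Integrable (fun x => M t x • n x) μ)
    (hM_anti : ∀ x, Antitone fun t => M t x) (hn : ∀ᵐ x ∂μ, ‖n x‖ ≤ 1) :
    Antitone fun t => (∫ x, M t x ∂μ) - ‖∫ x, M t x • n x ∂μ‖ := by
  intro u v huv
  have hmomentum : ‖∫ x, M u x • n x ∂μ - ∫ x, M v x • n x ∂μ‖ ≤
      (∫ x, M u x ∂μ) - ∫ x, M v x ∂μ := by
    rw [← integral_sub (hMn u) (hMn v), ← integral_sub (hM u) (hM v)]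
    simp only [← sub_smul]
    exact norm_integral_smul_le_integral_s9 ((hM u).sub (hM v))
      (.of_forall fun x => sub_nonneg.mpr (hM_anti x huv)) hn
  linarith [norm_sub_norm_le (∫ x, M u x • n x ∂μ) (∫ x, M v x • n x ∂μ)]

end WeightedIntegral

instance : IsFiniteMeasure sphereMeasure :=
  inferInstanceAs (IsFiniteMeasure (volume : Measure (EuclideanSpace ℝ (Fin 3))).toSphere)

theorem Continuous.integrable_sphereMeasure {F : Type*} [NormedAddCommGroup F]
    {g : Sphere2 → F} (hg : Continuous g) : Integrable g sphereMeasure :=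
  hg.integrable_of_hasCompactSupport (HasCompactSupport.of_compactSpace g)

theorem integral_mul_sphereCoord {g : Sphere2 → ℝ}
    (hg : Integrable (fun ω => g ω • (ω : EuclideanSpace ℝ (Fin 3))) sphereMeasure) (i : Fin 3) :
    ∫ ω, g ω * sphereCoord i ω ∂sphereMeasure =
      (∫ ω, g ω • (ω : EuclideanSpace ℝ (Fin 3)) ∂sphereMeasure) i := by
  simpa [sphereCoord] using (EuclideanSpace.proj (𝕜 := ℝ) i).integral_comp_comm hg

theorem EuclideanSpace.norm_fin_three (x : EuclideanSpace ℝ (Fin 3)) :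
    ‖x‖ = √(x 0 ^ 2 + x 1 ^ 2 + x 2 ^ 2) := by
  simp [EuclideanSpace.norm_eq, Fin.sum_univ_three, add_assoc]

theorem sqrt_sum_sq_const_mul {c : ℝ} (hc : 0 ≤ c) (x : EuclideanSpace ℝ (Fin 3)) :
    √((c * x 0) ^ 2 + (c * x 1) ^ 2 + (c * x 2) ^ 2) = c * ‖x‖ := by
  have hfactor : (c * x 0) ^ 2 + (c * x 1) ^ 2 + (c * x 2) ^ 2 =
      c ^ 2 * (x 0 ^ 2 + x 1 ^ 2 + x 2 ^ 2) := by ring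
  rw [hfactor, Real.sqrt_mul (sq_nonneg c), Real.sqrt_sq hc, EuclideanSpace.norm_fin_three]

theorem modified_bondi_energy_nonincreasing_general
    (𝓜 𝓜' : ℝ × Sphere2 → ℝ)
    (h𝓜 : Continuous 𝓜)
    (hderiv : ∀ (u : ℝ) (ω : Sphere2),
      HasDerivAt (fun t : ℝ => 𝓜 (t, ω)) (𝓜' (u, ω)) u)
    (hnonpos : ∀ x : ℝ × Sphere2, 𝓜' x ≤ 0) :
    Antitone (fun u : ℝ =>
      (1 / (4 * π)) * (∫ ω : Sphere2, 𝓜 (u, ω) ∂sphereMeasure) -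
        Real.sqrt
          (((1 / (4 * π)) * ∫ ω : Sphere2, 𝓜 (u, ω) * sphereCoord 0 ω ∂sphereMeasure) ^ 2 +
           ((1 / (4 * π)) * ∫ ω : Sphere2, 𝓜 (u, ω) * sphereCoord 1 ω ∂sphereMeasure) ^ 2 +
           ((1 / (4 * π)) * ∫ ω : Sphere2, 𝓜 (u, ω) * sphereCoord 2 ω ∂sphereMeasure) ^ 2)) := by
  have hc : (0 : ℝ) ≤ 1 / (4 * π) := by positivity
  have hslice : ∀ t, Continuous fun ω : Sphere2 => 𝓜 (t, ω) :=
    fun t => h𝓜.comp (Continuous.prodMk_right t)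
  have hmoment : ∀ t, Integrable (fun ω : Sphere2 => 𝓜 (t, ω) • (ω : EuclideanSpace ℝ (Fin 3)))
      sphereMeasure :=
    fun t => ((hslice t).smul continuous_subtype_val).integrable_sphereMeasure
  have hanti : ∀ ω : Sphere2, Antitone fun t => 𝓜 (t, ω) :=
    fun ω => antitone_of_hasDerivAt_nonpos (fun t => hderiv t ω) fun t => hnonpos (t, ω)
  have hunit : ∀ ω : Sphere2, ‖(ω : EuclideanSpace ℝ (Fin 3))‖ ≤ 1 :=
    fun ω => (norm_eq_of_mem_sphere ω).le
  have henergy := (antitone_integral_sub_norm_integral_smul (μ := sphereMeasure)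
    (fun t => (hslice t).integrable_sphereMeasure) hmoment hanti (.of_forall hunit)).const_mul hc
  convert henergy using 2 with u
  simp only [integral_mul_sphereCoord (hmoment u), sqrt_sum_sq_const_mul hc, mul_sub]

/-- Monotonicity (6.3) of the modified Bondi energy: if the modified mass aspect
`𝓜` has nonpositive `u`-derivative, then the modified Bondi energy
`𝐦₀ − √(𝐦₁² + 𝐦₂² + 𝐦₃²)` is nonincreasing. -/
theorem modified_bondi_energy_nonincreasing
    (𝓜 𝓜' : ℝ × Sphere2 → ℝ)
    (h𝓜 : Continuous 𝓜)
    (h𝓜' : Continuous 𝓜')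
    (hderiv : ∀ (u : ℝ) (ω : Sphere2),
      HasDerivAt (fun t : ℝ => 𝓜 (t, ω)) (𝓜' (u, ω)) u)
    (hnonpos : ∀ x : ℝ × Sphere2, 𝓜' x ≤ 0) :
    Antitone (fun u : ℝ =>
      (1 / (4 * π)) * (∫ ω : Sphere2, 𝓜 (u, ω) ∂sphereMeasure) -
        Real.sqrt
          (((1 / (4 * π)) * ∫ ω : Sphere2, 𝓜 (u, ω) * sphereCoord 0 ω ∂sphereMeasure) ^ 2 +
           ((1 / (4 * π)) * ∫ ω : Sphere2, 𝓜 (u, ω) * sphereCoord 1 ω ∂sphereMeasure) ^ 2 +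
           ((1 / (4 * π)) * ∫ ω : Sphere2, 𝓜 (u, ω) * sphereCoord 2 ω ∂sphereMeasure) ^ 2)) :=
  modified_bondi_energy_nonincreasing_general 𝓜 𝓜' h𝓜 hderiv hnonpos
end
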